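/- arXiv:2304.03517 — 3 statements merged into one kernel-verified Lean document; each statement's English description precedes it below -/
import Mathlib

section
/- Let 0 < a ≤ 1 be real. Then, as x → ∞, Σ_{0≤n≤x} H_n(a) − (x+a)·log(x+a) − (x+a)·(γ(0,a) − 1) = O( log(x+a) ); that is, there exist constants C > 0 and x₀ ≥ 1 such that the left-hand side is bounded in absolute value by C·log(x+a) for all x ≥ x₀. -/
open Filter Finset MeasureTheory

/-- `Hgen a n = ∑_{k=0}^n 1/(k+a)`. -/
noncomputable def Hgen (a : ℝ) (n : ℕ) : ℝ := ∑ k ∈ Finset.range (n + 1), 1 / ((k : ℝ) + a)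

/-!
Summation by parts gives `∑_{n ≤ N} H_n(a) = (N + 1 + a) H_N(a) - (N + 1)`. The sequence
`H_N(a) - log (N + a)` decreases to `γ`, while `H_N(a) - log (N + a) - 1/(N + a)` increases to it,
so `H_N(a) = log (N + a) + γ + O(1/N)`. Substituting this with `N = ⌊x⌋`, every term except
`(N + 1 - x) log (N + a)` is bounded.
-/

namespace Real

lemma log_sub_log_le_div {y z : ℝ} (hy : 0 < y) (hz : 0 < z) :
    log z - log y ≤ (z - y) / y := by
  have h := log_le_sub_one_of_pos (div_pos hz hy)
  rw [log_div hz.ne' hy.ne'] at h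
  rwa [sub_div, div_self hy.ne']

lemma div_le_log_sub_log {y z : ℝ} (hy : 0 < y) (hz : 0 < z) :
    (z - y) / z ≤ log z - log y := by
  have h := log_le_sub_one_of_pos (div_pos hy hz)
  rw [log_div hy.ne' hz.ne'] at h
  rw [sub_div, div_self hz.ne']
  linarith

end Real

section Hgen

variable {a : ℝ}

lemma Hgen_succ (a : ℝ) (n : ℕ) :
    Hgen a (n + 1) = Hgen a n + 1 / ((n : ℝ) + 1 + a) := by
  simp [Hgen, Finset.sum_range_succ]

lemma sum_range_Hgen (ha : 0 < a) (N : ℕ) :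
    ∑ n ∈ range (N + 1), Hgen a n = ((N : ℝ) + 1 + a) * Hgen a N - ((N : ℝ) + 1) := by
  induction N with
  | zero =>
    simp only [zero_add, sum_range_one, Hgen, Nat.cast_zero]
    field_simp
    ring
  | succ n ih =>
    have : (0 : ℝ) < n + 1 + a := by positivity
    rw [sum_range_succ, ih, Hgen_succ]
    push_cast
    field_simp
    ring

lemma antitone_Hgen_sub_log (ha : 0 < a) :
    Antitone fun N : ℕ => Hgen a N - Real.log (N + a) := by
  refine antitone_nat_of_succ_le fun n => ?_
  have h := Real.div_le_log_sub_log (y := n + a) (z := n + 1 + a) (by positivity) (by positivity)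
  simp only [Hgen_succ, Nat.cast_succ]
  rw [show (n : ℝ) + 1 + a - (n + a) = 1 by ring] at h
  linarith

lemma monotone_Hgen_sub_log_sub_inv (ha : 0 < a) :
    Monotone fun N : ℕ => Hgen a N - Real.log (N + a) - 1 / (N + a) := by
  refine monotone_nat_of_le_succ fun n => ?_
  have h := Real.log_sub_log_le_div (y := n + a) (z := n + 1 + a) (by positivity) (by positivity)
  simp only [Hgen_succ, Nat.cast_succ]
  rw [show (n : ℝ) + 1 + a - (n + a) = 1 by ring] at h
  have : (0 : ℝ) ≤ 1 / (n + 1 + a) := by positivity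
  linarith

lemma Hgen_sub_log_mem_Icc (ha : 0 < a) {γ : ℝ}
    (hγ : Tendsto (fun N : ℕ => Hgen a N - Real.log (N + a)) atTop (nhds γ)) (N : ℕ) :
    Hgen a N - Real.log (N + a) ∈ Set.Icc γ (γ + 1 / (N + a)) := by
  have hinv : Tendsto (fun N : ℕ => 1 / ((N : ℝ) + a)) atTop (nhds 0) := by
    simp only [one_div]
    exact (tendsto_atTop_add_const_right atTop a tendsto_natCast_atTop_atTop).inv_tendsto_atTop
  have hlow := (antitone_Hgen_sub_log ha).le_of_tendsto hγ N
  have hupp := (monotone_Hgen_sub_log_sub_inv ha).ge_of_tendsto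
    (by simpa using hγ.sub hinv) N
  exact ⟨hlow, by linarith⟩

lemma abs_sum_range_Hgen_sub_le (ha0 : 0 < a) (ha1 : a ≤ 1) {γ : ℝ}
    (hγ : Tendsto (fun N : ℕ => Hgen a N - Real.log (N + a)) atTop (nhds γ))
    {x : ℝ} (hx : 3 ≤ x) :
    |(∑ n ∈ range (⌊x⌋₊ + 1), Hgen a n) - (x + a) * Real.log (x + a) - (x + a) * (γ - 1)|
      ≤ Real.log (x + a) + |γ| + 3 := by
  set N := ⌊x⌋₊
  have hNx : (N : ℝ) ≤ x := Nat.floor_le (by linarith)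
  have hxN : x < N + 1 := Nat.lt_floor_add_one x
  have hN : (3 : ℝ) ≤ N := by exact_mod_cast Nat.le_floor (by exact_mod_cast hx)
  set L := Real.log (N + a)
  set Lx := Real.log (x + a)
  set t := Hgen a N - L
  obtain ⟨hγt, htγ⟩ := Hgen_sub_log_mem_Icc ha0 hγ N
  have hL0 : 0 ≤ L := Real.log_nonneg (by linarith)
  have hLLx : L ≤ Lx := Real.log_le_log (by positivity) (by linarith)
  have hLxL : Lx - L ≤ 1 / (N + a) := by
    have := Real.log_sub_log_le_div (y := N + a) (z := x + a) (by positivity) (by linarith)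
    have : (x + a - (N + a)) / (N + a) ≤ 1 / (N + a) := by gcongr; linarith
    linarith
  -- `N + 1 + a ≤ 2 (N + a)` turns both `O(1/N)` errors into bounded ones
  have hratio : (N + 1 + a) * (1 / (N + a)) ≤ 2 := by
    rw [mul_one_div, div_le_iff₀ (by positivity)]
    linarith
  have ht : (N + 1 + a) * (t - γ) ≤ 2 :=
    (mul_le_mul_of_nonneg_left (by linarith) (by positivity)).trans hratio
  have ht' : 0 ≤ (N + 1 + a) * (t - γ) := mul_nonneg (by positivity) (by linarith)
  have hlog : (x + a) * (Lx - L) ≤ 2 :=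
    (mul_le_mul (by linarith) hLxL (by linarith) (by positivity)).trans hratio
  have hlog' : 0 ≤ (x + a) * (Lx - L) := mul_nonneg (by positivity) (by linarith)
  have hθL : (N + 1 - x) * L ≤ Lx := by nlinarith
  have hθL' : 0 ≤ (N + 1 - x) * L := mul_nonneg (by linarith) hL0
  have hθγ : |(N + 1 - x) * γ| ≤ |γ| := by
    rw [abs_mul]
    exact mul_le_of_le_one_left (abs_nonneg γ) (abs_le.2 ⟨by linarith, by linarith⟩)
  have hθγ' := abs_le.1 hθγ
  have hdecomp : (∑ n ∈ range (N + 1), Hgen a n) - (x + a) * Lx - (x + a) * (γ - 1)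
      = (N + 1 + a) * (t - γ) + (N + 1 - x) * L + (N + 1 - x) * γ - (N + 1 - x)
        - (x + a) * (Lx - L) + a := by
    rw [sum_range_Hgen ha0, show Hgen a N = L + t by ring]
    ring
  rw [hdecomp, abs_le]
  constructor <;> linarith

end Hgen

theorem stmt4 (a : ℝ) (ha0 : 0 < a) (ha1 : a ≤ 1) (γ0 : ℝ)
    (hγ0 : Tendsto
      (fun N : ℕ => (∑ n ∈ Finset.range (N + 1), 1 / ((n : ℝ) + a)) - Real.log ((N : ℝ) + a))
      atTop (nhds γ0)) :
    ∃ C : ℝ, 0 < C ∧ ∃ x₀ : ℝ, 1 ≤ x₀ ∧ ∀ x : ℝ, x₀ ≤ x →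
      |(∑ n ∈ Finset.range (Nat.floor x + 1), Hgen a n)
          - (x + a) * Real.log (x + a) - (x + a) * (γ0 - 1)|
        ≤ C * Real.log (x + a) := by
  refine ⟨|γ0| + 4, by positivity, 3, by norm_num, fun x hx => ?_⟩
  have hbound := abs_sum_range_Hgen_sub_le ha0 ha1 hγ0 hx
  have hlog : 1 ≤ Real.log (x + a) := by
    rw [Real.le_log_iff_exp_le (by linarith)]
    linarith [Real.exp_one_lt_three]
  nlinarith [abs_nonneg γ0]
end

section
/- For every complex s with Re(s) > 1, ∫_0^∞ x^{s−1} log(1 + e^{−x/2}) / (1 − e^{−x}) dx = 2^{s−1} Γ(s) ( ζ_{H^−}(s) + ζ_{\widetilde{H}}(s) ). -/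
/-!
With `y = e^{-x/2}` the integrand is `x^{s-1} log(1 + y) / (1 - y²)`, and
`log(1 + y) / (1 - y²) = (log(1 + y) / (1 - y) + log(1 + y) / (1 + y)) / 2`.
Multiplying the logarithmic series by geometric series (Cauchy products) turns the two
summands into `∑ H_n^- yⁿ` and `∑ (-1)^{n-1} H_n yⁿ`. Integrating term by term,
`∫₀^∞ x^{s-1} e^{-nx/2} dx = 2^s Γ(s) / n^s`; the interchange is justified by absolute
convergence, since `H_n ≤ 1 + log n` and `Re s > 1`.
-/

open Filter Finset MeasureTheory

/-- The harmonic number `H_n = ∑_{k=1}^n 1/k` (so `Hnum n = ∑_{k<n} 1/(k+1)`). -/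
noncomputable def Hnum (n : ℕ) : ℝ := ∑ k ∈ Finset.range n, 1 / ((k : ℝ) + 1)

/-- The skew harmonic number `H_n^- = ∑_{k=1}^n (-1)^{k-1}/k`. -/
noncomputable def Hskew (n : ℕ) : ℝ := ∑ k ∈ Finset.range n, (-1) ^ k / ((k : ℝ) + 1)

/-- `ζ_{H^-}(s) = ∑_{n=1}^∞ H_n^- / n^s`. -/
noncomputable def zetaHminus (s : ℂ) : ℂ := ∑' n : ℕ, (Hskew (n + 1) : ℂ) / ((n : ℂ) + 1) ^ s

/-- `ζ_{H̃}(s) = ∑_{n=1}^∞ (-1)^{n-1} H_n/n^s`. -/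
noncomputable def zetaHtilde (s : ℂ) : ℂ :=
  ∑' n : ℕ, (-1) ^ n * (Hnum (n + 1) : ℂ) / ((n : ℂ) + 1) ^ s

lemma Hnum_eq_harmonic (n : ℕ) : Hnum n = harmonic n := by
  simp [Hnum, harmonic]

lemma Hnum_nonneg (n : ℕ) : 0 ≤ Hnum n :=
  sum_nonneg fun k _ => by positivity

lemma abs_neg_one_pow_mul_Hnum (k n : ℕ) : |(-1) ^ k * Hnum n| = Hnum n := by
  rw [abs_mul, abs_pow, abs_neg, abs_one, one_pow, one_mul, abs_of_nonneg (Hnum_nonneg n)]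

lemma abs_Hskew_le_Hnum (n : ℕ) : |Hskew n| ≤ Hnum n :=
  (abs_sum_le_sum_abs _ _).trans <| sum_le_sum fun k _ => by
    rw [abs_div, abs_pow, abs_neg, abs_one, one_pow, abs_of_pos (by positivity)]

lemma Hnum_succ_le_one_add_log (n : ℕ) : Hnum (n + 1) ≤ 1 + Real.log ((n : ℝ) + 1) := by
  simpa [Hnum_eq_harmonic] using harmonic_le_one_add_log (n + 1)

lemma summable_one_add_log_div_rpow {σ : ℝ} (hσ : 1 < σ) :
    Summable fun n : ℕ => (1 + Real.log ((n : ℝ) + 1)) / ((n : ℝ) + 1) ^ σ := by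
  set ε := (σ - 1) / 2
  have hε : 0 < ε := by simp only [ε]; linarith
  have hpow : Summable fun n : ℕ => ((n : ℝ) + 1) ^ (ε - σ) := by
    simpa using (summable_nat_add_iff 1).mpr
      (Real.summable_nat_rpow.mpr (by simp only [ε]; linarith : ε - σ < -1))
  have hn (n : ℕ) : (1 : ℝ) ≤ (n : ℝ) + 1 := by simp
  refine .of_nonneg_of_le (fun n => ?_) (fun n => ?_) (hpow.mul_left (1 + 1 / ε))
  · have := Real.log_nonneg (hn n)
    positivity
  have hlog : Real.log ((n : ℝ) + 1) ≤ ((n : ℝ) + 1) ^ ε / ε :=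
    Real.log_le_rpow_div (by positivity) hε
  have hone : (1 : ℝ) ≤ ((n : ℝ) + 1) ^ ε := Real.one_le_rpow (hn n) hε.le
  rw [div_le_iff₀ (by positivity), mul_assoc, ← Real.rpow_add (by positivity), sub_add_cancel]
  calc 1 + Real.log ((n : ℝ) + 1) ≤ ((n : ℝ) + 1) ^ ε + ((n : ℝ) + 1) ^ ε / ε :=
        add_le_add hone hlog
    _ = (1 + 1 / ε) * ((n : ℝ) + 1) ^ ε := by ring

lemma summable_abs_div_rpow_of_abs_le_Hnum {f : ℕ → ℝ} {σ : ℝ} (hσ : 1 < σ)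
    (hf : ∀ n, |f n| ≤ Hnum (n + 1)) : Summable fun n : ℕ => |f n| / ((n : ℝ) + 1) ^ σ :=
  .of_nonneg_of_le (fun n => by positivity)
    (fun n => div_le_div_of_nonneg_right ((hf n).trans (Hnum_succ_le_one_add_log n))
      (by positivity))
    (summable_one_add_log_div_rpow hσ)

lemma summable_ofReal_div_cpow_of_abs_le_Hnum {f : ℕ → ℝ} {s : ℂ} (hs : 1 < s.re)
    (hf : ∀ n, |f n| ≤ Hnum (n + 1)) :
    Summable fun n : ℕ => (f n : ℂ) / ((n : ℂ) + 1) ^ s := by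
  refine .of_norm <| (summable_abs_div_rpow_of_abs_le_Hnum hs hf).congr fun n => ?_
  have := Complex.norm_natCast_cpow_of_pos n.succ_pos s
  push_cast at this
  rw [norm_div, Complex.norm_real, Real.norm_eq_abs, this]

lemma hasSum_sum_range_mul_pow_succ {𝕜 : Type*} [NormedField 𝕜] [CompleteSpace 𝕜]
    {c : ℕ → 𝕜} {x A : 𝕜} (hx : ‖x‖ < 1) (hc : Summable fun k => ‖c k * x ^ (k + 1)‖)
    (hA : HasSum (fun k => c k * x ^ (k + 1)) A) :
    HasSum (fun n => (∑ k ∈ range (n + 1), c k) * x ^ (n + 1)) (A / (1 - x)) := by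
  have hgeom : Summable fun k => ‖x ^ k‖ := by
    simpa [norm_pow] using summable_geometric_of_lt_one (norm_nonneg x) hx
  have := hasSum_sum_range_mul_of_summable_norm hc hgeom
  rw [hA.tsum_eq, (hasSum_geometric_of_norm_lt_one hx).tsum_eq, ← div_eq_mul_inv] at this
  refine this.congr_fun fun n => ?_
  rw [sum_mul]
  refine sum_congr rfl fun k hk => ?_
  rw [mul_assoc, ← pow_add]
  congr 2
  have := mem_range.mp hk
  omega

lemma summable_norm_pow_succ_div {x : ℝ} (hx : |x| < 1) :
    Summable fun k : ℕ => ‖x ^ (k + 1) / ((k : ℝ) + 1)‖ := by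
  refine (Real.hasSum_pow_div_log_of_abs_lt_one (abs_abs x ▸ hx)).summable.congr fun k => ?_
  rw [norm_div, norm_pow, Real.norm_eq_abs, Real.norm_eq_abs,
    abs_of_pos (by positivity : (0 : ℝ) < (k : ℝ) + 1)]

lemma hasSum_Hnum_mul_pow {x : ℝ} (hx : |x| < 1) :
    HasSum (fun n => Hnum (n + 1) * x ^ (n + 1)) (-Real.log (1 - x) / (1 - x)) := by
  have hc (k : ℕ) : 1 / ((k : ℝ) + 1) * x ^ (k + 1) = x ^ (k + 1) / ((k : ℝ) + 1) := by ring
  refine hasSum_sum_range_mul_pow_succ (Real.norm_eq_abs x ▸ hx) ?_ ?_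
  · simpa only [hc] using summable_norm_pow_succ_div hx
  · simpa only [hc] using Real.hasSum_pow_div_log_of_abs_lt_one hx

lemma hasSum_Hskew_mul_pow {x : ℝ} (hx : |x| < 1) :
    HasSum (fun n => Hskew (n + 1) * x ^ (n + 1)) (Real.log (1 + x) / (1 - x)) := by
  have hx' : |-x| < 1 := by rwa [abs_neg]
  have hc (k : ℕ) :
      (-1) ^ k / ((k : ℝ) + 1) * x ^ (k + 1) = -((-x) ^ (k + 1) / ((k : ℝ) + 1)) := by
    rw [neg_pow, pow_succ]
    ring
  refine hasSum_sum_range_mul_pow_succ (Real.norm_eq_abs x ▸ hx) ?_ ?_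
  · simpa only [hc, norm_neg] using summable_norm_pow_succ_div hx'
  · simpa only [hc, sub_neg_eq_add, neg_neg] using (Real.hasSum_pow_div_log_of_abs_lt_one hx').neg

noncomputable def Hcoeff (n : ℕ) : ℝ := (Hskew (n + 1) + (-1) ^ n * Hnum (n + 1)) / 2

lemma abs_Hcoeff_le (n : ℕ) : |Hcoeff n| ≤ Hnum (n + 1) := by
  have h := abs_add_le (Hskew (n + 1)) ((-1) ^ n * Hnum (n + 1))
  rw [abs_neg_one_pow_mul_Hnum] at h
  rw [Hcoeff, abs_div, abs_two]
  linarith [abs_Hskew_le_Hnum (n + 1)]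

lemma hasSum_Hcoeff_mul_pow {x : ℝ} (hx : |x| < 1) :
    HasSum (fun n => Hcoeff n * x ^ (n + 1)) (Real.log (1 + x) / (1 - x ^ 2)) := by
  have hx' : |-x| < 1 := by rwa [abs_neg]
  have h1 : 1 - x ≠ 0 := by linarith [le_abs_self x]
  have h2 : 1 + x ≠ 0 := by linarith [neg_abs_le x]
  have h := ((hasSum_Hskew_mul_pow hx).sub (hasSum_Hnum_mul_pow hx')).div_const 2
  rw [sub_neg_eq_add, neg_div, sub_neg_eq_add] at h
  have hval : Real.log (1 + x) / (1 - x ^ 2)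
      = (Real.log (1 + x) / (1 - x) + Real.log (1 + x) / (1 + x)) / 2 := by
    rw [show 1 - x ^ 2 = (1 - x) * (1 + x) by ring]
    field_simp
    ring
  rw [hval]
  refine h.congr_fun fun n => ?_
  rw [Hcoeff, neg_pow x, pow_succ (-1 : ℝ)]
  ring

lemma hasSum_Hcoeff_mul_exp {t : ℝ} (ht : 0 < t) :
    HasSum (fun n : ℕ => Hcoeff n * Real.exp (-(((n : ℝ) + 1) / 2) * t))
      (Real.log (1 + Real.exp (-t / 2)) / (1 - Real.exp (-t))) := by
  have hy : |Real.exp (-t / 2)| < 1 := by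
    rw [Real.abs_exp, Real.exp_lt_one_iff]
    linarith
  have hsq : Real.exp (-t / 2) ^ 2 = Real.exp (-t) := by
    rw [← Real.exp_nat_mul]
    congr 1
    push_cast
    ring
  rw [← hsq]
  refine (hasSum_Hcoeff_mul_pow hy).congr_fun fun n => ?_
  rw [← Real.exp_nat_mul]
  congr 2
  push_cast
  ring

lemma hasSum_Gamma_mul_Hcoeff_div_cpow {s : ℂ} (hs : 1 < s.re) :
    HasSum (fun n : ℕ => Complex.Gamma s * Hcoeff n / ((((n : ℝ) + 1) / 2 : ℝ) : ℂ) ^ s)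
      (∫ x in Set.Ioi (0 : ℝ),
        (x : ℂ) ^ (s - 1) * ((Real.log (1 + Real.exp (-x / 2)) : ℝ) : ℂ)
          / (1 - ((Real.exp (-x) : ℝ) : ℂ))) := by
  have hsummable : Summable fun n : ℕ => ‖(Hcoeff n : ℂ)‖ / (((n : ℝ) + 1) / 2) ^ s.re := by
    refine ((summable_abs_div_rpow_of_abs_le_Hnum hs abs_Hcoeff_le).mul_left (2 ^ s.re)).congr
      fun n => ?_
    rw [Complex.norm_real, Real.norm_eq_abs, Real.div_rpow (by positivity) zero_le_two]
    field_simp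
  have hmellin :
      HasSum (fun n : ℕ => Complex.Gamma s * Hcoeff n / ((((n : ℝ) + 1) / 2 : ℝ) : ℂ) ^ s)
        (mellin (fun t => ((Real.log (1 + Real.exp (-t / 2)) / (1 - Real.exp (-t)) : ℝ) : ℂ)) s) :=
    hasSum_mellin (p := fun n : ℕ => ((n : ℝ) + 1) / 2) (fun n => Or.inr (by positivity))
      (by linarith) (fun t ht => by
        simpa only [Complex.ofReal_mul] using
          Complex.hasSum_ofReal.mpr (hasSum_Hcoeff_mul_exp ht))
      hsummable
  convert hmellin using 1
  refine setIntegral_congr_fun measurableSet_Ioi fun t _ => ?_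
  rw [smul_eq_mul]
  push_cast
  ring

lemma Gamma_mul_Hcoeff_div_cpow (n : ℕ) (s : ℂ) :
    Complex.Gamma s * Hcoeff n / ((((n : ℝ) + 1) / 2 : ℝ) : ℂ) ^ s
      = 2 ^ (s - 1) * Complex.Gamma s * ((Hskew (n + 1) : ℂ) / ((n : ℂ) + 1) ^ s
        + (-1) ^ n * (Hnum (n + 1) : ℂ) / ((n : ℂ) + 1) ^ s) := by
  have hhalf : ((((n : ℝ) + 1) / 2 : ℝ) : ℂ) ^ s = ((n : ℂ) + 1) ^ s / 2 ^ s := by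
    have := Complex.div_cpow_ofReal_nonneg (n.cast_add_one_pos (α := ℝ)).le zero_le_two s
    push_cast at this ⊢
    exact this
  have hn : ((n : ℂ) + 1) ^ s ≠ 0 :=
    Complex.cpow_ne_zero_iff.mpr (Or.inl (by exact_mod_cast n.succ_ne_zero))
  have h2 : (2 : ℂ) ^ s ≠ 0 := Complex.cpow_ne_zero_iff.mpr (Or.inl two_ne_zero)
  rw [hhalf, Complex.cpow_sub _ _ two_ne_zero, Complex.cpow_one, Hcoeff]
  push_cast
  field_simp

theorem stmt11 (s : ℂ) (hs : 1 < s.re) :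
    (∫ x in Set.Ioi (0 : ℝ),
        (x : ℂ) ^ (s - 1) * ((Real.log (1 + Real.exp (-x / 2)) : ℝ) : ℂ)
          / (1 - ((Real.exp (-x) : ℝ) : ℂ)))
      = (2 : ℂ) ^ (s - 1) * Complex.Gamma s * (zetaHminus s + zetaHtilde s) := by
  have hminus := summable_ofReal_div_cpow_of_abs_le_Hnum hs (abs_Hskew_le_Hnum <| · + 1)
  have htilde := summable_ofReal_div_cpow_of_abs_le_Hnum hs
    (f := fun n => (-1) ^ n * Hnum (n + 1)) fun n => (abs_neg_one_pow_mul_Hnum n (n + 1)).le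
  push_cast at htilde
  exact (hasSum_Gamma_mul_Hcoeff_div_cpow hs).unique <|
    ((hminus.hasSum.add htilde.hasSum).mul_left _).congr_fun (Gamma_mul_Hcoeff_div_cpow · s)
end

section
/- For every complex s with Re(s) > 1, (1/2) ( ζ_H(s,1) + ζ_H(s,1/2) ) = ζ_H(s) + 2^{s−1} ζ_{H^−}(s) + 2^{s−1} ζ_{\widetilde{H}}(s). -/
open Filter Finset MeasureTheory

/-- The harmonic Hurwitz zeta function `ζ_H(s,a) = ∑_{n=0}^∞ H_n(a)/(n+a)^s`. -/
noncomputable def zetaH (s : ℂ) (a : ℝ) : ℂ :=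
  ∑' n : ℕ, (Hgen a n : ℂ) / ((n : ℂ) + (a : ℂ)) ^ s

/-- The harmonic zeta function `ζ_H(s) = ∑_{n=1}^∞ H_n/n^s`. -/
noncomputable def zetaHnat (s : ℂ) : ℂ := ∑' n : ℕ, (Hnum (n + 1) : ℂ) / ((n : ℂ) + 1) ^ s

/-
Split `ζ_{H^-}(s) + ζ_{\widetilde H}(s) = ∑ (H_n^- + (-1)^{n-1} H_n) / n^s` by the parity of `n`.
For `n = 2m+1` the numerator is `H_n^- + H_n = 2 O_{m+1}`, where `O_j = ∑_{k<j} 1/(2k+1)`, and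
`H_m(1/2) = 2 O_{m+1}`, so these terms sum to `2^{-s} ζ_H(s,1/2)`. For `n = 2m+2` the numerator
is `H_n^- - H_n = -H_{m+1}` and `n^s = 2^s (m+1)^s`, so these terms sum to `-2^{-s} ζ_H(s)`.
Multiplying by `2^{s-1}` and using `ζ_H(s,1) = ζ_H(s)` gives the identity. The splitting is
legitimate because `H_n ≤ 1 + log n = O(n^ε)` makes every series absolutely convergent.
-/

noncomputable def oddHarmonic (m : ℕ) : ℝ := ∑ k ∈ Finset.range m, 1 / (2 * (k : ℝ) + 1)

noncomputable def oddHarmonicZeta (s : ℂ) : ℂ :=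
  ∑' m : ℕ, (oddHarmonic (m + 1) : ℂ) / (2 * (m : ℂ) + 1) ^ s

lemma Hskew_succ (n : ℕ) : Hskew (n + 1) = Hskew n + (-1) ^ n / ((n : ℝ) + 1) :=
  Finset.sum_range_succ _ _

lemma Hnum_succ (n : ℕ) : Hnum (n + 1) = Hnum n + 1 / ((n : ℝ) + 1) :=
  Finset.sum_range_succ _ _

lemma oddHarmonic_succ (n : ℕ) : oddHarmonic (n + 1) = oddHarmonic n + 1 / (2 * (n : ℝ) + 1) :=
  Finset.sum_range_succ _ _

lemma Hskew_add_Hnum_odd (m : ℕ) :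
    Hskew (2 * m + 1) + Hnum (2 * m + 1) = 2 * oddHarmonic (m + 1) := by
  induction m with
  | zero => norm_num [Hskew, Hnum, oddHarmonic]
  | succ m ih =>
    rw [show 2 * (m + 1) + 1 = 2 * m + 1 + 1 + 1 by ring, Hskew_succ, Hskew_succ, Hnum_succ,
      Hnum_succ, oddHarmonic_succ (m + 1), Odd.neg_one_pow ⟨m, rfl⟩,
      Even.neg_one_pow ⟨m + 1, by ring⟩]
    push_cast
    linear_combination ih

lemma Hskew_sub_Hnum_even (m : ℕ) : Hskew (2 * m + 2) - Hnum (2 * m + 2) = -Hnum (m + 1) := by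
  induction m with
  | zero => norm_num [Hskew, Hnum]
  | succ m ih =>
    rw [show 2 * (m + 1) + 2 = 2 * m + 2 + 1 + 1 by ring, Hskew_succ, Hskew_succ, Hnum_succ,
      Hnum_succ, Hnum_succ (m + 1), Even.neg_one_pow ⟨m + 1, by ring⟩,
      Odd.neg_one_pow ⟨m + 1, by ring⟩]
    push_cast
    have h_halve : 1 / (2 * (m : ℝ) + 3 + 1) = 1 / 2 * (1 / ((m : ℝ) + 1 + 1)) := by
      field_simp; ring
    linear_combination ih - 2 * h_halve

lemma Hgen_half (n : ℕ) : Hgen (1 / 2) n = 2 * oddHarmonic (n + 1) := by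
  rw [Hgen, oddHarmonic, Finset.mul_sum]
  refine Finset.sum_congr rfl fun k _ => ?_
  field_simp

lemma Hnum_succ_le_rpow {ε : ℝ} (hε : 0 < ε) (n : ℕ) :
    Hnum (n + 1) ≤ (1 + 1 / ε) * ((n + 1 : ℕ) : ℝ) ^ ε := by
  have h_one_le : 1 ≤ ((n + 1 : ℕ) : ℝ) ^ ε := Real.one_le_rpow (by simp) hε.le
  calc Hnum (n + 1) ≤ 1 + Real.log (n + 1 : ℕ) := by
        rw [Hnum_eq_harmonic]; exact harmonic_le_one_add_log _
    _ ≤ 1 + ((n + 1 : ℕ) : ℝ) ^ ε / ε := by gcongr; exact Real.log_le_rpow_div (by positivity) hε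
    _ ≤ (1 + 1 / ε) * ((n + 1 : ℕ) : ℝ) ^ ε := by
        rw [add_mul, one_mul, one_div_mul_eq_div]; gcongr

lemma summable_Hnum_div_rpow {r : ℝ} (hr : 1 < r) :
    Summable fun n : ℕ => Hnum (n + 1) / ((n + 1 : ℕ) : ℝ) ^ r := by
  obtain ⟨ε, hε, hεr⟩ : ∃ ε : ℝ, 0 < ε ∧ 1 < r - ε := ⟨(r - 1) / 2, by linarith, by linarith⟩
  have h_dom : Summable fun n : ℕ => (1 + 1 / ε) * (1 / ((n + 1 : ℕ) : ℝ) ^ (r - ε)) :=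
    ((summable_nat_add_iff 1).mpr (Real.summable_one_div_nat_rpow.mpr hεr)).mul_left _
  refine h_dom.of_nonneg_of_le (fun n => by have := Hnum_nonneg (n + 1); positivity) fun n => ?_
  have hpos : (0 : ℝ) < ((n + 1 : ℕ) : ℝ) := by positivity
  calc Hnum (n + 1) / ((n + 1 : ℕ) : ℝ) ^ r
      ≤ (1 + 1 / ε) * ((n + 1 : ℕ) : ℝ) ^ ε / ((n + 1 : ℕ) : ℝ) ^ r := by
        gcongr; exact Hnum_succ_le_rpow hε n
    _ = (1 + 1 / ε) * (1 / ((n + 1 : ℕ) : ℝ) ^ (r - ε)) := by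
        rw [Real.rpow_sub hpos]; field_simp

lemma summable_div_cpow_of_norm_le_Hnum {s : ℂ} (hs : 1 < s.re) {c : ℕ → ℂ}
    (hc : ∀ n, ‖c n‖ ≤ Hnum (n + 1)) : Summable fun n : ℕ => c n / ((n : ℂ) + 1) ^ s := by
  refine Summable.of_norm_bounded (summable_Hnum_div_rpow hs) fun n => ?_
  rw [norm_div, ← Nat.cast_succ, Complex.norm_natCast_cpow_of_pos n.succ_pos]
  gcongr
  exact hc n

lemma two_mul_cpow {x : ℝ} (hx : 0 ≤ x) (s : ℂ) : (2 * (x : ℂ)) ^ s = 2 ^ s * (x : ℂ) ^ s := by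
  simpa using Complex.mul_cpow_ofReal_nonneg zero_le_two hx s

lemma zetaH_one (s : ℂ) : zetaH s 1 = zetaHnat s := by
  simp only [zetaH, zetaHnat, Complex.ofReal_one]
  rfl

lemma zetaH_half (s : ℂ) : zetaH s (1 / 2) = 2 * 2 ^ s * oddHarmonicZeta s := by
  rw [zetaH, oddHarmonicZeta, ← tsum_mul_left]
  refine tsum_congr fun n => ?_
  have hx : (0 : ℝ) < n + 1 / 2 := by positivity
  have h_odd : 2 * (n : ℂ) + 1 = 2 * ((n + 1 / 2 : ℝ) : ℂ) := by push_cast; ring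
  rw [Hgen_half, h_odd, two_mul_cpow hx.le]
  have : ((n + 1 / 2 : ℝ) : ℂ) ^ s ≠ 0 :=
    Complex.cpow_ne_zero_iff.mpr (Or.inl (Complex.ofReal_ne_zero.mpr hx.ne'))
  have : (2 : ℂ) ^ s ≠ 0 := Complex.cpow_ne_zero_iff.mpr (Or.inl two_ne_zero)
  push_cast
  field_simp

lemma zetaHminus_add_zetaHtilde {s : ℂ} (hs : 1 < s.re) :
    zetaHminus s + zetaHtilde s = 2 * oddHarmonicZeta s - zetaHnat s / 2 ^ s := by
  set g : ℕ → ℂ := fun n => ((Hskew (n + 1) : ℂ) + (-1) ^ n * Hnum (n + 1)) / ((n : ℂ) + 1) ^ s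
  have h_skew : Summable fun n : ℕ => (Hskew (n + 1) : ℂ) / ((n : ℂ) + 1) ^ s :=
    summable_div_cpow_of_norm_le_Hnum hs fun n => by
      simpa using abs_Hskew_le_Hnum (n + 1)
  have h_tilde : Summable fun n : ℕ => (-1) ^ n * (Hnum (n + 1) : ℂ) / ((n : ℂ) + 1) ^ s :=
    summable_div_cpow_of_norm_le_Hnum hs fun n => by
      simp [abs_of_nonneg (Hnum_nonneg _)]
  have h_sum : zetaHminus s + zetaHtilde s = ∑' n, g n := by
    rw [zetaHminus, zetaHtilde, ← h_skew.tsum_add h_tilde]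
    exact tsum_congr fun n => (add_div _ _ _).symm
  have hg : Summable g := (h_skew.add h_tilde).congr fun n => (add_div _ _ _).symm
  have h_even : ∑' m, g (2 * m) = 2 * oddHarmonicZeta s := by
    rw [oddHarmonicZeta, ← tsum_mul_left]
    refine tsum_congr fun m => ?_
    have h_num : (Hskew (2 * m + 1) : ℂ) + Hnum (2 * m + 1) = 2 * oddHarmonic (m + 1) := by
      exact_mod_cast Hskew_add_Hnum_odd m
    simp only [g, pow_mul, neg_one_sq, one_pow, one_mul, h_num]
    push_cast
    ring
  have h_odd : ∑' m, g (2 * m + 1) = -(zetaHnat s / 2 ^ s) := by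
    rw [zetaHnat, ← tsum_div_const, ← tsum_neg]
    refine tsum_congr fun m => ?_
    have h_num : (Hskew (2 * m + 2) : ℂ) - Hnum (2 * m + 2) = -Hnum (m + 1) := by
      exact_mod_cast Hskew_sub_Hnum_even m
    have h_den : ((2 * m + 1 : ℕ) : ℂ) + 1 = 2 * ((m + 1 : ℝ) : ℂ) := by push_cast; ring
    simp only [g, Odd.neg_one_pow ⟨m, rfl⟩, neg_one_mul, ← sub_eq_add_neg, h_num, h_den,
      two_mul_cpow (by positivity : (0 : ℝ) ≤ m + 1)]
    push_cast
    field_simp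
  rw [h_sum, ← tsum_even_add_odd (hg.comp_injective (mul_right_injective₀ two_ne_zero))
    (hg.comp_injective fun a b h => by omega), h_even, h_odd, sub_eq_add_neg]

theorem stmt12 (s : ℂ) (hs : 1 < s.re) :
    (1 / 2) * (zetaH s 1 + zetaH s (1 / 2))
      = zetaHnat s + (2 : ℂ) ^ (s - 1) * zetaHminus s + (2 : ℂ) ^ (s - 1) * zetaHtilde s := by
  have h_two : (2 : ℂ) ^ s ≠ 0 := Complex.cpow_ne_zero_iff.mpr (Or.inl two_ne_zero)
  rw [add_assoc, ← mul_add, zetaHminus_add_zetaHtilde hs, zetaH_one, zetaH_half,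
    Complex.cpow_sub _ _ two_ne_zero, Complex.cpow_one]
  field_simp
  ring
end
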